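/- For every integer k ≥ 1, every μ > 0 and every p with 2 < p < 4k+2, the ground-state energy on the real line is strictly negative: E^{(k)}(ℝ) < 0. Equivalently, there exists u ∈ C_c^∞(ℝ, ℂ) with ∫_ℝ |u|² dx = 1 and (1/2)∫_ℝ |u^{(k)}|² dx − (μ/p)∫_ℝ |u|^p dx < 0. -/

import Mathlib

/-!
Take any nonzero smooth compactly supported `ψ` and spread it out, keeping the `L²` norm
equal to one: `u_L x = (L ‖ψ‖₂²)^(-1/2) ψ (x / L)`. The kinetic term then decays like
`L^(-2k)` while the nonlinear term decays like `L^(1 - p/2)`, and `1 - p/2 > -2k` is exactly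
`p < 4k + 2`; so for `L` large the nonlinear term wins and the energy is negative.
-/

open MeasureTheory Filter

lemma exists_contDiff_hasCompactSupport_ne_zero (F : Type*) [NormedAddCommGroup F]
    [NormedSpace ℝ F] [Nontrivial F] :
    ∃ ψ : ℝ → F, ContDiff ℝ (⊤ : ℕ∞) ψ ∧ HasCompactSupport ψ ∧ ψ ≠ 0 := by
  obtain ⟨v, hv⟩ := exists_ne (0 : F)
  let b : ContDiffBump (0 : ℝ) := ⟨1, 2, one_pos, one_lt_two⟩
  refine ⟨fun x => b x • v, b.contDiff.smul contDiff_const, b.hasCompactSupport.smul_right,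
    fun h => hv ?_⟩
  simpa [b.one_of_mem_closedBall (Metric.mem_closedBall_self zero_le_one)] using
    congr_fun h 0

lemma integral_norm_rpow_pos {F : Type*} [NormedAddCommGroup F] {ψ : ℝ → F}
    (hψ : Continuous ψ) (hψc : HasCompactSupport ψ) (hψ0 : ψ ≠ 0) {q : ℝ} (hq : 0 < q) :
    0 < ∫ x, ‖ψ x‖ ^ q := by
  obtain ⟨x, hx⟩ := Function.ne_iff.mp hψ0
  have hcont : Continuous fun x => ‖ψ x‖ ^ q := hψ.norm.rpow_const fun _ => Or.inr hq.le
  exact hcont.integral_pos_of_hasCompactSupport_nonneg_nonzero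
    (hψc.norm.comp_left (g := (· ^ q)) (Real.zero_rpow hq.ne')) (fun _ => by positivity)
    (Real.rpow_pos_of_pos (norm_pos_iff.mpr hx) q).ne'

lemma exists_pos_mul_rpow_lt_mul_rpow (c₁ : ℝ) {c₂ r s : ℝ} (hc₂ : 0 < c₂) (hrs : r < s) :
    ∃ L > 0, c₁ * L ^ r < c₂ * L ^ s := by
  obtain ⟨L, hL, hL0⟩ :=
    (((tendsto_rpow_atTop (sub_pos.mpr hrs)).eventually_gt_atTop (c₁ / c₂)).and
      (eventually_gt_atTop 0)).exists
  refine ⟨L, hL0, ?_⟩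
  calc c₁ * L ^ r = c₁ / c₂ * (c₂ * L ^ r) := by field_simp
    _ < L ^ (s - r) * (c₂ * L ^ r) := by gcongr
    _ = c₂ * L ^ s := by rw [mul_left_comm, ← Real.rpow_add hL0, sub_add_cancel]

section Dilation

variable {F : Type*} [NormedAddCommGroup F] [NormedSpace ℝ F] {ψ : ℝ → F} {L : ℝ}

lemma integral_norm_rpow_smul_comp_inv_mul {a : ℝ} (ha : 0 ≤ a) (hL : 0 < L) (q : ℝ) :
    ∫ x, ‖a • ψ (L⁻¹ * x)‖ ^ q = a ^ q * (L * ∫ x, ‖ψ x‖ ^ q) := by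
  simp_rw [norm_smul, Real.norm_of_nonneg ha, Real.mul_rpow ha (norm_nonneg _)]
  rw [integral_const_mul, Measure.integral_comp_inv_mul_left (fun y => ‖ψ y‖ ^ q),
    abs_of_pos hL, smul_eq_mul]

lemma integral_norm_sq_smul_comp_inv_mul {a : ℝ} (ha : 0 ≤ a) (hL : 0 < L) :
    ∫ x, ‖a • ψ (L⁻¹ * x)‖ ^ 2 = a ^ 2 * (L * ∫ x, ‖ψ x‖ ^ 2) := by
  exact_mod_cast integral_norm_rpow_smul_comp_inv_mul (ψ := ψ) ha hL 2

variable (ψ L) in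
noncomputable def normalizedDilation (x : ℝ) : F :=
  (L * ∫ y, ‖ψ y‖ ^ 2) ^ (-(1 / 2) : ℝ) • ψ (L⁻¹ * x)

lemma contDiff_normalizedDilation {n : WithTop ℕ∞} (hψ : ContDiff ℝ n ψ) :
    ContDiff ℝ n (normalizedDilation ψ L) :=
  contDiff_const.smul (hψ.comp (contDiff_const.mul contDiff_id))

lemma hasCompactSupport_normalizedDilation (hψ : HasCompactSupport ψ) (hL : L ≠ 0) :
    HasCompactSupport (normalizedDilation ψ L) :=
  (hψ.comp_smul (inv_ne_zero hL)).comp_left (smul_zero _)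

lemma iteratedDeriv_normalizedDilation {k : ℕ} (hψ : ContDiff ℝ k ψ) (x : ℝ) :
    iteratedDeriv k (normalizedDilation ψ L) x =
      ((L * ∫ y, ‖ψ y‖ ^ 2) ^ (-(1 / 2) : ℝ) * L⁻¹ ^ k) • iteratedDeriv k ψ (L⁻¹ * x) := by
  unfold normalizedDilation
  rw [iteratedDeriv_fun_const_smul_field, iteratedDeriv_comp_const_smul hψ, smul_smul]

variable (hT : 0 < ∫ x, ‖ψ x‖ ^ 2) (hL : 0 < L)
include hT hL

lemma integral_norm_sq_normalizedDilation : ∫ x, ‖normalizedDilation ψ L x‖ ^ 2 = 1 := by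
  have hLT : 0 < L * ∫ x, ‖ψ x‖ ^ 2 := mul_pos hL hT
  unfold normalizedDilation
  rw [integral_norm_sq_smul_comp_inv_mul (by positivity) hL,
    ← Real.rpow_natCast, ← Real.rpow_mul hLT.le]
  norm_num [Real.rpow_neg_one]
  field_simp

lemma integral_norm_rpow_normalizedDilation (q : ℝ) :
    ∫ x, ‖normalizedDilation ψ L x‖ ^ q =
      (∫ x, ‖ψ x‖ ^ 2) ^ (-(q / 2)) * (∫ x, ‖ψ x‖ ^ q) * L ^ (1 - q / 2) := by
  unfold normalizedDilation
  rw [integral_norm_rpow_smul_comp_inv_mul (by positivity) hL,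
    ← Real.rpow_mul (by positivity), Real.mul_rpow hL.le hT.le]
  have hLpow : L ^ (-(1 / 2) * q) * L = L ^ (1 - q / 2) := by
    rw [← Real.rpow_add_one hL.ne']
    ring_nf
  rw [← hLpow]
  ring_nf

lemma integral_norm_iteratedDeriv_normalizedDilation {k : ℕ} (hψ : ContDiff ℝ k ψ) :
    ∫ x, ‖iteratedDeriv k (normalizedDilation ψ L) x‖ ^ 2 =
      (∫ x, ‖iteratedDeriv k ψ x‖ ^ 2) / (∫ x, ‖ψ x‖ ^ 2) * L ^ (-(2 * k : ℝ)) := by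
  simp_rw [iteratedDeriv_normalizedDilation hψ]
  have hLT : 0 < L * ∫ x, ‖ψ x‖ ^ 2 := mul_pos hL hT
  have hLk : L ^ (-(2 * k : ℝ)) = (L⁻¹ ^ k) ^ 2 := by
    rw [Real.rpow_neg hL.le, inv_pow, inv_pow, ← pow_mul, mul_comm k, ← Real.rpow_natCast]
    push_cast; rfl
  rw [integral_norm_sq_smul_comp_inv_mul (by positivity) hL, mul_pow, ← Real.rpow_natCast _ 2,
    ← Real.rpow_mul hLT.le, hLk]
  norm_num [Real.rpow_neg_one]
  field_simp

end Dilation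

theorem statement5 (k : ℕ) (μ : ℝ) (hμ : 0 < μ)
    (p : ℝ) (hp : 2 < p) (hp' : p < 4 * k + 2) :
    ∃ u : ℝ → ℂ, ContDiff ℝ (⊤ : ℕ∞) u ∧ HasCompactSupport u ∧
      (∫ x : ℝ, ‖u x‖ ^ 2) = 1 ∧
      (1 / 2) * (∫ x : ℝ, ‖iteratedDeriv k u x‖ ^ 2) -
        (μ / p) * (∫ x : ℝ, ‖u x‖ ^ p) < 0 := by
  obtain ⟨ψ, hψ, hψc, hψ0⟩ := exists_contDiff_hasCompactSupport_ne_zero ℂ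
  have hT : 0 < ∫ x, ‖ψ x‖ ^ (2 : ℝ) := integral_norm_rpow_pos hψ.continuous hψc hψ0 two_pos
  have hB : 0 < ∫ x, ‖ψ x‖ ^ p := integral_norm_rpow_pos hψ.continuous hψc hψ0 (by linarith)
  norm_cast at hT
  obtain ⟨L, hL, hE⟩ := exists_pos_mul_rpow_lt_mul_rpow
    (1 / 2 * ((∫ x, ‖iteratedDeriv k ψ x‖ ^ 2) / ∫ x, ‖ψ x‖ ^ 2))
    (c₂ := μ / p * ((∫ x, ‖ψ x‖ ^ 2) ^ (-(p / 2)) * ∫ x, ‖ψ x‖ ^ p))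
    (r := -(2 * k)) (s := 1 - p / 2) (by positivity) (by linarith)
  refine ⟨normalizedDilation ψ L, contDiff_normalizedDilation hψ,
    hasCompactSupport_normalizedDilation hψc hL.ne', integral_norm_sq_normalizedDilation hT hL, ?_⟩
  rw [integral_norm_iteratedDeriv_normalizedDilation hT hL (hψ.of_le (by exact_mod_cast le_top)),
    integral_norm_rpow_normalizedDilation hT hL]
  linarith
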